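/- arXiv:1505.00931 — 3 statements merged into one kernel-verified Lean document; each statement's English description precedes it below -/
import Mathlib

section
/- The generating function B(z) = Σ_{n≥0} b_{n+1} z^n of the twisted Stern sequence satisfies B(z) = 2 - (1+z+z^2) B(z^2) as formal power series, where b_0 = 0, b_1 = 1, b_{2n} = -b_n, b_{2n+1} = -(b_n + b_{n+1}) for n ≥ 1. -/
/-!
Compare coefficients in `B(z) + (1 + z + z²) B(z²) = 2`. As `B(z²)` has only even
coefficients, the coefficient of `z^(2k+2)` is `b(2k+3) + b(k+2) + b(k+1)` and that of
`z^(2k+3)` is `b(2k+4) + b(k+2)`; both vanish by the recurrences. The coefficients of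
`1` and `z` are `2 b(1)` and `b(2) + b(1)`.
-/

open PowerSeries

/-- B(z^d): the coefficient of z^n is the coefficient of z^(n/d) when d ∣ n, else 0. -/
noncomputable def substPow {R : Type*} [Semiring R] (d : ℕ) (f : PowerSeries R) :
    PowerSeries R :=
  PowerSeries.mk fun n => if d ∣ n then PowerSeries.coeff (R := R) (n / d) f else 0

section

variable {R : Type*} [Semiring R]

theorem coeff_substPow_mul (f : R⟦X⟧) {d : ℕ} (hd : 0 < d) (n : ℕ) :
    coeff (d * n) (substPow d f) = coeff n f := by
  simp [substPow, Nat.mul_div_cancel_left n hd]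

theorem coeff_substPow_of_not_dvd (f : R⟦X⟧) {d n : ℕ} (h : ¬d ∣ n) :
    coeff n (substPow d f) = 0 := by
  simp [substPow, h]

theorem coeff_zero_ofNat (m : ℕ) [m.AtLeastTwo] : coeff 0 (ofNat(m) : R⟦X⟧) = ofNat(m) := by
  rw [← map_ofNat (C (R := R)), coeff_C]
  simp

theorem coeff_ofNat_succ (n m : ℕ) [m.AtLeastTwo] : coeff (n + 1) (ofNat(m) : R⟦X⟧) = 0 := by
  rw [← map_ofNat (C (R := R)), coeff_C]
  simp

theorem coeff_one_add_X_add_X_sq_mul_zero (g : R⟦X⟧) :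
    coeff 0 ((1 + X + X ^ 2) * g) = coeff 0 g := by
  simp [add_mul, pow_two, mul_assoc]

theorem coeff_one_add_X_add_X_sq_mul_one (g : R⟦X⟧) :
    coeff 1 ((1 + X + X ^ 2) * g) = coeff 1 g + coeff 0 g := by
  simp [add_mul, pow_two, mul_assoc, coeff_succ_X_mul]

theorem coeff_one_add_X_add_X_sq_mul_add_two (g : R⟦X⟧) (n : ℕ) :
    coeff (n + 2) ((1 + X + X ^ 2) * g) = coeff (n + 2) g + coeff (n + 1) g + coeff n g := by
  simp [add_mul, pow_two, mul_assoc, coeff_succ_X_mul]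

end

theorem twisted_stern_generating_function_equation_general
    (b : ℕ → ℤ) (h1 : b 1 = 1)
    (heven : ∀ n : ℕ, 1 ≤ n → b (2 * n) = -b n)
    (hodd : ∀ n : ℕ, 1 ≤ n → b (2 * n + 1) = -(b n + b (n + 1))) :
    PowerSeries.mk (fun n => b (n + 1)) =
      2 - (1 + PowerSeries.X + PowerSeries.X ^ 2) *
        substPow 2 (PowerSeries.mk (fun n => b (n + 1))) := by
  set B := PowerSeries.mk fun n => b (n + 1)
  have hB_even (n : ℕ) : coeff (2 * n) (substPow 2 B) = b (n + 1) := by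
    rw [coeff_substPow_mul B two_pos, coeff_mk]
  have hB_odd (n : ℕ) : coeff (2 * n + 1) (substPow 2 B) = 0 :=
    coeff_substPow_of_not_dvd B (by omega)
  rw [eq_sub_iff_add_eq]
  ext n
  rw [map_add, coeff_mk]
  obtain _ | _ | n := n
  · rw [coeff_one_add_X_add_X_sq_mul_zero, coeff_zero_ofNat]
    linear_combination 2 * h1 + hB_even 0
  · rw [coeff_one_add_X_add_X_sq_mul_one, coeff_ofNat_succ]
    linear_combination heven 1 le_rfl + hB_odd 0 + hB_even 0
  rw [coeff_one_add_X_add_X_sq_mul_add_two, coeff_ofNat_succ]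
  obtain ⟨k, rfl | rfl⟩ := Nat.even_or_odd' n
  · linear_combination hodd (k + 1) k.succ_pos + hB_even (k + 1) + hB_odd k + hB_even k
  · linear_combination heven (k + 2) (by omega) + hB_odd (k + 1) + hB_even (k + 1) + hB_odd k

/-- The generating function `B(z) = Σ_{n≥0} b_{n+1} z^n` of the twisted Stern
sequence satisfies `B(z) = 2 - (1+z+z^2) B(z^2)` as formal power series. -/
theorem twisted_stern_generating_function_equation
    (b : ℕ → ℤ) (h0 : b 0 = 0) (h1 : b 1 = 1)
    (heven : ∀ n : ℕ, 1 ≤ n → b (2 * n) = -b n)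
    (hodd : ∀ n : ℕ, 1 ≤ n → b (2 * n + 1) = -(b n + b (n + 1))) :
    PowerSeries.mk (fun n => b (n + 1)) =
      2 - (1 + PowerSeries.X + PowerSeries.X ^ 2) *
        substPow 2 (PowerSeries.mk (fun n => b (n + 1))) :=
  twisted_stern_generating_function_equation_general b h1 heven hodd
end

section
/- The function M(z) = Σ_{j≥0} (−1)^j z^{2^j} / Π_{i=0}^{j−1}(1 − z^{2^i}) satisfies the functional equation M(z^2) = (z − 1)(M(z) − z) for all real z with |z| < 1. -/
/-!
The `j`-th term of `M(z²)` is `z - 1` times the `(j+1)`-st term of `M(z)`: the denominator of the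
latter is `1 - z` times the denominator of the former, and the signs differ by `-1`. Summing over `j`
and splitting off the first term `z` of `M(z)` gives the equation; the series converge by the ratio
test, the ratio of consecutive terms being `-z^(2^j) / (1 - z^(2^j)) → 0`.
-/

open Finset Filter Topology

/-- `M(z) = Σ_{j≥0} (−1)^j z^{2^j} / Π_{i<j}(1 − z^{2^i})` for `|z| < 1`. -/
noncomputable def Mfun (z : ℝ) : ℝ :=
  ∑' j : ℕ, (-1) ^ j * z ^ 2 ^ j / ∏ i ∈ Finset.range j, (1 - z ^ 2 ^ i)

variable {K : Type*}

section Field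

variable [Field K]

def Mterm (z : K) (j : ℕ) : K :=
  (-1) ^ j * z ^ 2 ^ j / ∏ i ∈ range j, (1 - z ^ 2 ^ i)

@[simp]
lemma Mterm_zero (z : K) : Mterm z 0 = z := by
  simp [Mterm]

lemma Mterm_succ (z : K) (j : ℕ) :
    Mterm z (j + 1) = Mterm z j * (-z ^ 2 ^ j / (1 - z ^ 2 ^ j)) := by
  rw [Mterm, Mterm, div_mul_div_comm, prod_range_succ, pow_succ (2 : ℕ), pow_mul]
  ring

lemma Mterm_sq {z : K} (hz : z ≠ 1) (j : ℕ) : Mterm (z ^ 2) j = (z - 1) * Mterm z (j + 1) := by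
  have hpow (i : ℕ) : (z ^ 2) ^ 2 ^ i = z ^ 2 ^ (i + 1) := by
    rw [← pow_mul, pow_succ, mul_comm]
  have hden : ∏ i ∈ range (j + 1), (1 - z ^ 2 ^ i)
      = (1 - z) * ∏ i ∈ range j, (1 - (z ^ 2) ^ 2 ^ i) := by
    rw [prod_range_succ', mul_comm]
    simp only [hpow, pow_zero, pow_one]
  have hz' : 1 - z ≠ 0 := sub_ne_zero.mpr hz.symm
  rw [Mterm, Mterm, hden, hpow, ← div_div, mul_div_assoc', pow_succ (-1 : K)]
  field_simp
  ring

end Field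

section NormedField

variable [NormedField K]

lemma tendsto_pow_two_pow_nhds_zero {z : K} (hz : ‖z‖ < 1) :
    Tendsto (fun j : ℕ ↦ z ^ 2 ^ j) atTop (𝓝 0) :=
  (tendsto_pow_atTop_nhds_zero_of_norm_lt_one hz).comp
    (tendsto_pow_atTop_atTop_of_one_lt one_lt_two)

lemma summable_Mterm [CompleteSpace K] {z : K} (hz : ‖z‖ < 1) : Summable (Mterm z) := by
  have hratio : Tendsto (fun j : ℕ ↦ ‖-z ^ 2 ^ j / (1 - z ^ 2 ^ j)‖) atTop (𝓝 0) := by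
    have h := tendsto_pow_two_pow_nhds_zero hz
    simpa using (h.neg.div (tendsto_const_nhds.sub h) (by simp)).norm
  refine summable_of_ratio_norm_eventually_le (r := 1 / 2) (by norm_num) ?_
  filter_upwards [hratio.eventually (eventually_le_nhds (by norm_num : (0 : ℝ) < 1 / 2))]
    with j hj
  rw [Mterm_succ, norm_mul, mul_comm]
  exact mul_le_mul_of_nonneg_right hj (norm_nonneg _)

end NormedField

/-- `M` satisfies `M(z^2) = (z − 1)(M(z) − z)` for all real `z` with `|z| < 1`. -/
theorem Mfun_functional_equation (z : ℝ) (hz : |z| < 1) :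
    Mfun (z ^ 2) = (z - 1) * (Mfun z - z) := by
  have hz1 : z ≠ 1 := by
    rintro rfl
    norm_num at hz
  have hsplit : Mfun z = z + ∑' j, Mterm z (j + 1) := by
    have h := (summable_Mterm (z := z) hz).tsum_eq_zero_add
    rwa [Mterm_zero] at h
  calc Mfun (z ^ 2) = ∑' j, (z - 1) * Mterm z (j + 1) := tsum_congr (Mterm_sq hz1)
    _ = (z - 1) * (Mfun z - z) := by rw [tsum_mul_left, hsplit, add_sub_cancel_left]
end

section
/- Suppose polynomials A(z), B(z), C(z) with integer coefficients satisfy A(z) T(z) + B(z) M(z) + C(z) = R(z) as formal power series, where T(z) = (1−z) T(z^2) and M(z^2) = (z−1)(M(z) − z). Then A(z^2) T(z) − (z−1)^2 B(z^2) M(z) + [z(z−1)^2 B(z^2) + (1−z) C(z^2)] = (1−z) R(z^2), and the order of vanishing at 0 of (1−z) R(z^2) is twice that of R(z) (when R ≠ 0). -/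
/-!
Substituting `z ↦ z^2` is a ring endomorphism of `ℚ⟦z⟧` (Mathlib's `PowerSeries.expand 2`).
Applying it to `A T + B M + C = R`, multiplying by `1 − z` and eliminating `T(z^2)` and `M(z^2)`
with the two functional equations gives the identity. Since `1 − z` is a unit, the order of
`(1 − z) R(z^2)` is that of `R(z^2)`, which is twice the order of `R`.
-/

open PowerSeries Polynomial

/-- An integer polynomial viewed as a power series over ℚ. -/
noncomputable def toPS (p : Polynomial ℤ) : PowerSeries ℚ :=
  ((p.map (Int.castRingHom ℚ) : Polynomial ℚ) : PowerSeries ℚ)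

namespace PowerSeries

variable {R : Type*} [CommRing R]

theorem substPow_eq_expand {d : ℕ} (hd : d ≠ 0) (f : R⟦X⟧) : substPow d f = expand d hd f := by
  ext n
  simp [substPow, coeff_expand]

theorem expand_coe {d : ℕ} (hd : d ≠ 0) (p : R[X]) :
    expand d hd (p : R⟦X⟧) = (p.comp (Polynomial.X ^ d) : R⟦X⟧) := by
  change ((expand d hd).comp (Polynomial.coeToPowerSeries.algHom R)) p =
    ((Polynomial.coeToPowerSeries.algHom R).comp (Polynomial.expand R d)) p
  congr 1
  exact Polynomial.algHom_ext (by simp)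

theorem order_one_sub_X_mul_expand [IsDomain R] {d : ℕ} (hd : d ≠ 0) (f : R⟦X⟧) :
    ((1 - X) * expand d hd f).order = d * f.order := by
  have hunit : IsUnit (1 - X : R⟦X⟧) := by simp [isUnit_iff_constantCoeff]
  rw [order_mul, order_zero_of_unit hunit, zero_add, order_expand, nsmul_eq_mul]

theorem expand_two_approximation_form {T M a b c r : R⟦X⟧}
    (hT : T = (1 - X) * expand 2 two_ne_zero T)
    (hM : expand 2 two_ne_zero M = (X - 1) * (M - X))
    (hr : a * T + b * M + c = r) :
    expand 2 two_ne_zero a * T - (X - 1) ^ 2 * expand 2 two_ne_zero b * M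
        + (X * (X - 1) ^ 2 * expand 2 two_ne_zero b + (1 - X) * expand 2 two_ne_zero c)
      = (1 - X) * expand 2 two_ne_zero r := by
  have hr₂ := congrArg (expand 2 two_ne_zero) hr
  simp only [map_add, map_mul] at hr₂
  linear_combination (1 - X) * hr₂ + expand 2 two_ne_zero a * hT
    - (1 - X) * expand 2 two_ne_zero b * hM

end PowerSeries

theorem toPS_comp_X_pow {d : ℕ} (hd : d ≠ 0) (p : Polynomial ℤ) :
    toPS (p.comp (Polynomial.X ^ d)) = PowerSeries.expand d hd (toPS p) := by
  rw [toPS, toPS, PowerSeries.expand_coe, Polynomial.map_comp, Polynomial.map_pow,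
    Polynomial.map_X]

/-- If `A T + B M + C = R` with `T(z) = (1−z)T(z^2)` and `M(z^2) = (z−1)(M(z)−z)`,
then `A(z^2) T(z) − (z−1)^2 B(z^2) M(z) + [z(z−1)^2 B(z^2) + (1−z) C(z^2)]
= (1−z) R(z^2)`, and `ord((1−z) R(z^2)) = 2 ord(R)` when `R ≠ 0`. -/
theorem TM_approximation_iteration
    (A B C : Polynomial ℤ) (T M R : PowerSeries ℚ)
    (hT : T = (1 - PowerSeries.X) * substPow 2 T)
    (hM : substPow 2 M = (PowerSeries.X - 1) * (M - PowerSeries.X))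
    (hR : toPS A * T + toPS B * M + toPS C = R) :
    toPS (A.comp (Polynomial.X ^ 2)) * T
        - toPS ((Polynomial.X - 1) ^ 2 * B.comp (Polynomial.X ^ 2)) * M
        + toPS (Polynomial.X * (Polynomial.X - 1) ^ 2 * B.comp (Polynomial.X ^ 2)
            + (1 - Polynomial.X) * C.comp (Polynomial.X ^ 2))
      = (1 - PowerSeries.X) * substPow 2 R ∧
    (R ≠ 0 → ((1 - PowerSeries.X) * substPow 2 R).order = 2 * R.order) := by
  simp only [substPow_eq_expand two_ne_zero] at hT hM ⊢
  refine ⟨?_, fun _ => mod_cast PowerSeries.order_one_sub_X_mul_expand two_ne_zero R⟩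
  have hmul (p q : Polynomial ℤ) : toPS (p * q) = toPS p * toPS q := by simp [toPS]
  have hadd (p q : Polynomial ℤ) : toPS (p + q) = toPS p + toPS q := by simp [toPS]
  have hX : toPS Polynomial.X = PowerSeries.X := by simp [toPS]
  have hX_sub_one : toPS ((Polynomial.X - 1) ^ 2) = (PowerSeries.X - 1) ^ 2 := by simp [toPS]
  have hone_sub_X : toPS (1 - Polynomial.X) = 1 - PowerSeries.X := by simp [toPS]
  simp only [hmul, hadd, toPS_comp_X_pow two_ne_zero, hX, hX_sub_one, hone_sub_X]
  exact PowerSeries.expand_two_approximation_form hT hM hR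
end
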